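/- Let p ∈ (0,1) and γ ∈ ℝ with p < |γ| < 1/p. Then the series Σ_{i ∈ ℤ} p^{|i|}·|γ|^i converges, the discrete second difference satisfies γ^{y+1} - 2γ^y + γ^{y-1} = ((1-γ)²/γ)·γ^y for all y ∈ ℤ, and for all x ∈ ℤ, ((1-p)/(1+p))·Σ_{i ∈ ℤ} p^{|i|}·γ^{x+i}·A(γ) = γ^x, where A(γ) = 1 - (p/(1-p)²)·(1-γ)²/γ. -/

import Mathlib

lemma dlap_hasSum (p : ℝ) (hp0 : 0 < p) (γ : ℝ) (hγ0 : γ ≠ 0)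
    (hγlo : p < |γ|) (hγhi : |γ| < 1 / p) :
    HasSum (fun i : ℤ => p ^ |i| * γ ^ i)
      ((1 - p * γ)⁻¹ + (p / γ) * (1 - p / γ)⁻¹) := by
  have h1 : |p * γ| < 1 := by
    rw [abs_mul, abs_of_pos hp0]
    calc p * |γ| < p * (1 / p) := by
          exact mul_lt_mul_of_pos_left hγhi hp0
      _ = 1 := by field_simp
  have h2 : |p / γ| < 1 := by
    rw [abs_div, abs_of_pos hp0, div_lt_one (lt_trans hp0 hγlo)]
    exact hγlo
  have hf1 : HasSum (fun n : ℕ => p ^ |(n : ℤ)| * γ ^ (n : ℤ)) (1 - p * γ)⁻¹ := by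
    have := hasSum_geometric_of_abs_lt_one h1
    convert this using 2 with n
    rw [Int.abs_natCast, zpow_natCast, zpow_natCast, mul_pow]
  have hf2 : HasSum (fun n : ℕ => p ^ |(-((n : ℤ) + 1))| * γ ^ (-((n : ℤ) + 1)))
      ((p / γ) * (1 - p / γ)⁻¹) := by
    have := (hasSum_geometric_of_abs_lt_one h2).mul_left (p / γ)
    convert this using 2 with n
    · rfl
    have hcast : (-((n:ℤ)+1)) = -(((n+1 : ℕ) : ℤ)) := by push_cast; ring
    rw [hcast, abs_neg, Int.abs_natCast, zpow_neg, zpow_natCast, zpow_natCast,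
      div_pow, pow_succ, pow_succ]
    have hγn : γ ^ n ≠ 0 := pow_ne_zero n hγ0
    field_simp
  exact HasSum.of_nat_of_neg_add_one hf1 hf2

theorem discrete_laplace_power_function_univariate
    (p : ℝ) (hp0 : 0 < p) (hp1 : p < 1) (γ : ℝ)
    (hγlo : p < |γ|) (hγhi : |γ| < 1 / p) (x : ℤ)
    (A : ℝ) (hA : A = 1 - p / (1 - p) ^ 2 * ((1 - γ) ^ 2 / γ)) :
    (Summable fun i : ℤ => p ^ |i| * |γ| ^ i) ∧
      (∀ y : ℤ, γ ^ (y + 1) - 2 * γ ^ y + γ ^ (y - 1) = (1 - γ) ^ 2 / γ * γ ^ y) ∧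
      (1 - p) / (1 + p) * (∑' i : ℤ, p ^ |i| * γ ^ (x + i)) * A = γ ^ x := by
  have hγ0 : γ ≠ 0 := by
    intro h; rw [h, abs_zero] at hγlo; exact absurd hγlo (not_lt.2 hp0.le)
  have habs0 : |γ| ≠ 0 := abs_ne_zero.2 hγ0
  refine ⟨?_, ?_, ?_⟩
  · exact (dlap_hasSum p hp0 |γ| habs0 (by rwa [abs_abs]) (by rwa [abs_abs])).summable
  · intro y
    rw [zpow_add₀ hγ0, zpow_sub₀ hγ0, zpow_one]
    field_simp
    ring
  · have hS := dlap_hasSum p hp0 γ hγ0 hγlo hγhi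
    have hSx : HasSum (fun i : ℤ => p ^ |i| * γ ^ (x + i))
        (γ ^ x * ((1 - p * γ)⁻¹ + (p / γ) * (1 - p / γ)⁻¹)) := by
      convert hS.mul_left (γ ^ x) using 2 with i
      · rfl
      rw [zpow_add₀ hγ0]; ring
    rw [hSx.tsum_eq, hA]
    have hpγ1 : 1 - p * γ ≠ 0 := by
      have : |p * γ| < 1 := by
        rw [abs_mul, abs_of_pos hp0]
        calc p * |γ| < p * (1 / p) := mul_lt_mul_of_pos_left hγhi hp0
          _ = 1 := by field_simp
      have h1γ : p * γ < 1 := (abs_lt.1 this).2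
      exact sub_ne_zero.2 (ne_of_lt h1γ).symm
    have hpγ2 : γ - p ≠ 0 := by
      intro h
      have : γ = p := by linarith
      rw [this, abs_of_pos hp0] at hγlo; linarith
    have hp1' : (1 : ℝ) - p ≠ 0 := by linarith
    have hp1'' : (1 : ℝ) + p ≠ 0 := by linarith
    have h2 : 1 - p / γ ≠ 0 := by
      intro h
      apply hpγ2
      field_simp at h
      linarith
    field_simp
    ring
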